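/- Let G' be a finite AND/OR tree with root s, cost functions p, d, and a fixed linear order on nodes for tie-breaking. Let G0 be the solution base rooted at s that includes, at each internal OR node, its tie-break-least successor minimizing c + p (and all successors at AND nodes), and let Ḡ0 be the disproof base rooted at s that includes, at each internal AND node, its tie-break-least successor minimizing c + d (and all successors at OR nodes). Then the set of nodes common to G0 and Ḡ0 is exactly the set of nodes of the PNS* selection path from s; in particular, G0 and Ḡ0 have exactly one leaf of G' in common, namely the leaf at which the PNS* selection path terminates. -/

import Mathlib

open scoped ENNReal

/-- A node of an AND/OR graph is labeled either OR or AND. -/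
inductive NodeKind : Type
  | orN
  | andN
deriving DecidableEq

/-- A leaf is a solvable terminal, an unsolvable terminal, or a non-terminal leaf. -/
inductive LeafKind : Type
  | solv
  | unsolv
  | nonterm
deriving DecidableEq

/-- The combination rule `Ψ ∈ {sum, max}`. -/
inductive CombRule : Type
  | sum
  | max

/-- A finite acyclic AND/OR graph on a node type `V`: a successor function
(`succ n = ∅` means `n` is a leaf), an OR/AND label on each node, a
terminal/non-terminal designation for leaves, edge costs in `ℝ≥0∞`, and
well-foundedness of the successor relation (no directed cycles). -/
structure AOGraph (V : Type) where
  succ : V → Finset V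
  kind : V → NodeKind
  leafKind : V → LeafKind
  cost : V → V → ℝ≥0∞
  acyclic : WellFounded (fun a b : V => a ∈ succ b)

/-- Combining the values of the successors by `Ψ`. -/
noncomputable def comb {V : Type} (Ψ : CombRule) (s : Finset V) (f : V → ℝ≥0∞) : ℝ≥0∞ :=
  match Ψ with
  | .sum => ∑ x ∈ s, f x
  | .max => s.sup f

/-- `p` is the proof-cost function of `G` with heuristic `h` and rule `Ψ`. -/
def IsProofCost {V : Type} (G : AOGraph V) (h : V → ℝ≥0∞) (Ψ : CombRule)
    (p : V → ℝ≥0∞) : Prop :=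
  ∀ n : V,
    (G.succ n = ∅ →
      p n = (match G.leafKind n with
             | .solv => 0
             | .unsolv => ⊤
             | .nonterm => h n)) ∧
    (G.succ n ≠ ∅ →
      p n = (match G.kind n with
             | .orN => (G.succ n).inf (fun m => G.cost n m + p m)
             | .andN => comb Ψ (G.succ n) (fun m => G.cost n m + p m)))

/-- `d` is the disproof-cost function of `G` with heuristic `h̄` and rule `Ψ`. -/
def IsDisproofCost {V : Type} (G : AOGraph V) (hb : V → ℝ≥0∞) (Ψ : CombRule)
    (d : V → ℝ≥0∞) : Prop :=
  ∀ n : V,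
    (G.succ n = ∅ →
      d n = (match G.leafKind n with
             | .solv => ⊤
             | .unsolv => 0
             | .nonterm => hb n)) ∧
    (G.succ n ≠ ∅ →
      d n = (match G.kind n with
             | .orN => comb Ψ (G.succ n) (fun m => G.cost n m + d m)
             | .andN => (G.succ n).inf (fun m => G.cost n m + d m)))

/-- `m` is the tie-break-least element of `s` minimizing `f`. -/
def TieBreakMin {V : Type} [LinearOrder V] (s : Finset V) (f : V → ℝ≥0∞) (m : V) : Prop :=
  m ∈ s ∧ (∀ x ∈ s, f m ≤ f x) ∧ (∀ x ∈ s, f x = f m → m ≤ x)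

/-- `IsPNSPath G p d s l`: `l` is the PNS* selection path from `s`: at an
internal OR node follow the tie-break-least successor minimizing `c + p`, at
an internal AND node the tie-break-least successor minimizing `c + d`,
terminating at a leaf. -/
inductive IsPNSPath {V : Type} [LinearOrder V] (G : AOGraph V) (p d : V → ℝ≥0∞) :
    V → List V → Prop
  | leaf (n : V) (hleaf : G.succ n = ∅) : IsPNSPath G p d n [n]
  | stepOr (n m : V) (l : List V) (hne : G.succ n ≠ ∅) (hk : G.kind n = .orN)
      (hm : TieBreakMin (G.succ n) (fun x => G.cost n x + p x) m)
      (hrec : IsPNSPath G p d m l) : IsPNSPath G p d n (n :: l)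
  | stepAnd (n m : V) (l : List V) (hne : G.succ n ≠ ∅) (hk : G.kind n = .andN)
      (hm : TieBreakMin (G.succ n) (fun x => G.cost n x + d x) m)
      (hrec : IsPNSPath G p d m l) : IsPNSPath G p d n (n :: l)

/-- Membership in the solution base `G₀` rooted at `s` that includes, at each
internal OR node, its tie-break-least successor minimizing `c + p`, and all
successors at each internal AND node. -/
inductive InGreedyProofBase {V : Type} [LinearOrder V] (G : AOGraph V)
    (p : V → ℝ≥0∞) (s : V) : V → Prop
  | root : InGreedyProofBase G p s s
  | orStep (n m : V) (hn : InGreedyProofBase G p s n) (hne : G.succ n ≠ ∅)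
      (hk : G.kind n = .orN)
      (hm : TieBreakMin (G.succ n) (fun x => G.cost n x + p x) m) :
      InGreedyProofBase G p s m
  | andStep (n m : V) (hn : InGreedyProofBase G p s n) (hne : G.succ n ≠ ∅)
      (hk : G.kind n = .andN) (hm : m ∈ G.succ n) :
      InGreedyProofBase G p s m

/-- Membership in the disproof base `Ḡ₀` rooted at `s` that includes, at each
internal AND node, its tie-break-least successor minimizing `c + d`, and all
successors at each internal OR node. -/
inductive InGreedyDisproofBase {V : Type} [LinearOrder V] (G : AOGraph V)
    (d : V → ℝ≥0∞) (s : V) : V → Prop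
  | root : InGreedyDisproofBase G d s s
  | andStep (n m : V) (hn : InGreedyDisproofBase G d s n) (hne : G.succ n ≠ ∅)
      (hk : G.kind n = .andN)
      (hm : TieBreakMin (G.succ n) (fun x => G.cost n x + d x) m) :
      InGreedyDisproofBase G d s m
  | orStep (n m : V) (hn : InGreedyDisproofBase G d s n) (hne : G.succ n ≠ ∅)
      (hk : G.kind n = .orN) (hm : m ∈ G.succ n) :
      InGreedyDisproofBase G d s m

/-!
A node lying in both greedy bases has its unique parent in both bases as well, and there the two
bases can share a successor only along the PNS* choice: at an OR node `G₀` keeps just the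
`c + p`-minimal successor while `Ḡ₀` keeps all of them, and dually at an AND node. Induction from
the root therefore shows that the common nodes are exactly those of the selection path, whose
only leaf is its last node.
-/

section PNSPath

variable {V : Type} {G : AOGraph V} {p d : V → ℝ≥0∞}

def selectionCost (G : AOGraph V) (p d : V → ℝ≥0∞) (n : V) : V → ℝ≥0∞ :=
  match G.kind n with
  | .orN => fun x => G.cost n x + p x
  | .andN => fun x => G.cost n x + d x

theorem selectionCost_of_orN {n : V} (hk : G.kind n = .orN) :
    selectionCost G p d n = fun x => G.cost n x + p x := by
  rw [selectionCost, hk]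

theorem selectionCost_of_andN {n : V} (hk : G.kind n = .andN) :
    selectionCost G p d n = fun x => G.cost n x + d x := by
  rw [selectionCost, hk]

variable [LinearOrder V]

theorem TieBreakMin.unique {s : Finset V} {f : V → ℝ≥0∞} {m m' : V}
    (h : TieBreakMin s f m) (h' : TieBreakMin s f m') : m = m' := by
  obtain ⟨hm, hle, htb⟩ := h
  obtain ⟨hm', hle', htb'⟩ := h'
  have hf : f m = f m' := le_antisymm (hle _ hm') (hle' _ hm)
  exact le_antisymm (htb _ hm' hf.symm) (htb' _ hm hf)

namespace IsPNSPath

theorem head_mem {n : V} {l : List V} (hl : IsPNSPath G p d n l) : n ∈ l := by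
  cases hl <;> simp

theorem ne_nil {n : V} {l : List V} (hl : IsPNSPath G p d n l) : l ≠ [] :=
  List.ne_nil_of_mem hl.head_mem

theorem mem_of_tieBreakMin {s q n : V} {l : List V} (hl : IsPNSPath G p d s l) (hq : q ∈ l)
    (hn : TieBreakMin (G.succ q) (selectionCost G p d q) n) : n ∈ l := by
  induction hl with
  | leaf n₀ hleaf =>
    obtain rfl := List.mem_singleton.1 hq
    simpa [hleaf] using hn.1
  | stepOr n₀ m l' _ hk hm hrec ih =>
    rcases List.mem_cons.1 hq with rfl | hq'
    · rw [selectionCost_of_orN hk] at hn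
      exact List.mem_cons_of_mem _ (hn.unique hm ▸ hrec.head_mem)
    · exact List.mem_cons_of_mem _ (ih hq')
  | stepAnd n₀ m l' _ hk hm hrec ih =>
    rcases List.mem_cons.1 hq with rfl | hq'
    · rw [selectionCost_of_andN hk] at hn
      exact List.mem_cons_of_mem _ (hn.unique hm ▸ hrec.head_mem)
    · exact List.mem_cons_of_mem _ (ih hq')

theorem inGreedyBases_of_mem {s n y : V} {l : List V} (hl : IsPNSPath G p d n l)
    (hp : InGreedyProofBase G p s n) (hd : InGreedyDisproofBase G d s n) (hy : y ∈ l) :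
    InGreedyProofBase G p s y ∧ InGreedyDisproofBase G d s y := by
  induction hl with
  | leaf n₀ _ =>
    obtain rfl := List.mem_singleton.1 hy
    exact ⟨hp, hd⟩
  | stepOr n₀ m l' hne hk hm _ ih =>
    rcases List.mem_cons.1 hy with rfl | hy'
    · exact ⟨hp, hd⟩
    · exact ih (.orStep n₀ m hp hne hk hm) (.orStep n₀ m hd hne hk hm.1) hy'
  | stepAnd n₀ m l' hne hk hm _ ih =>
    rcases List.mem_cons.1 hy with rfl | hy'
    · exact ⟨hp, hd⟩
    · exact ih (.andStep n₀ m hp hne hk hm.1) (.andStep n₀ m hd hne hk hm) hy'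

theorem mem_leaf_iff_getLast? {n y : V} {l : List V} (hl : IsPNSPath G p d n l) :
    (y ∈ l ∧ G.succ y = ∅) ↔ l.getLast? = some y := by
  induction hl with
  | leaf n₀ hleaf =>
    simp only [List.mem_singleton, List.getLast?_singleton, Option.some.injEq]
    constructor
    · rintro ⟨rfl, -⟩; rfl
    · rintro rfl; exact ⟨rfl, hleaf⟩
  | stepOr n₀ m l' hne _ _ hrec ih | stepAnd n₀ m l' hne _ _ hrec ih =>
    obtain ⟨b, t, rfl⟩ := List.exists_cons_of_ne_nil hrec.ne_nil
    rw [List.getLast?_cons_cons, ← ih, List.mem_cons]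
    constructor
    · rintro ⟨rfl | hy, hleaf⟩
      · exact absurd hleaf hne
      · exact ⟨hy, hleaf⟩
    · exact fun ⟨hy, hleaf⟩ => ⟨Or.inr hy, hleaf⟩

end IsPNSPath

theorem mem_of_inGreedyProofBase_of_inGreedyDisproofBase
    (htree : ∀ x n n' : V, x ∈ G.succ n → x ∈ G.succ n' → n = n')
    {s n : V} {l : List V} (hl : IsPNSPath G p d s l)
    (hp : InGreedyProofBase G p s n) (hd : InGreedyDisproofBase G d s n) : n ∈ l := by
  induction hp with
  | root => exact hl.head_mem
  | orStep q n _ _ hk hm ih =>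
    cases hd with
    | root => exact hl.head_mem
    | andStep q' _ _ _ hk' hm' =>
      obtain rfl := htree _ _ _ hm'.1 hm.1
      cases hk.symm.trans hk'
    | orStep q' _ hq' _ _ hmem' =>
      obtain rfl := htree _ _ _ hmem' hm.1
      exact hl.mem_of_tieBreakMin (ih hq') (by rwa [selectionCost_of_orN hk])
  | andStep q n _ _ hk hmem ih =>
    cases hd with
    | root => exact hl.head_mem
    | andStep q' _ hq' _ _ hm' =>
      obtain rfl := htree _ _ _ hm'.1 hmem
      exact hl.mem_of_tieBreakMin (ih hq') (by rwa [selectionCost_of_andN hk])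
    | orStep q' _ _ _ hk' hmem' =>
      obtain rfl := htree _ _ _ hmem' hmem
      cases hk.symm.trans hk'

end PNSPath

theorem greedy_bases_intersection_eq_pns_path_general {V : Type} [LinearOrder V]
    (G : AOGraph V)
    (htree : ∀ x n n' : V, x ∈ G.succ n → x ∈ G.succ n' → n = n')
    (p d : V → ℝ≥0∞)
    (s : V) (l : List V) (hl : IsPNSPath G p d s l) :
    (∀ n : V, (InGreedyProofBase G p s n ∧ InGreedyDisproofBase G d s n) ↔ n ∈ l) ∧
    (∃! x : V, G.succ x = ∅ ∧ InGreedyProofBase G p s x ∧ InGreedyDisproofBase G d s x) ∧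
    (∀ x : V, l.getLast? = some x →
      G.succ x = ∅ ∧ InGreedyProofBase G p s x ∧ InGreedyDisproofBase G d s x) := by
  have hbases : ∀ n, (InGreedyProofBase G p s n ∧ InGreedyDisproofBase G d s n) ↔ n ∈ l :=
    fun n => ⟨fun ⟨hp, hd⟩ => mem_of_inGreedyProofBase_of_inGreedyDisproofBase htree hl hp hd,
      fun hn => hl.inGreedyBases_of_mem .root .root hn⟩
  have hleaves : ∀ x, (G.succ x = ∅ ∧ InGreedyProofBase G p s x ∧
      InGreedyDisproofBase G d s x) ↔ l.getLast? = some x := fun x => by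
    rw [← hl.mem_leaf_iff_getLast?, ← hbases]
    exact and_comm
  obtain ⟨x, hx⟩ := Option.ne_none_iff_exists'.1 (mt List.getLast?_eq_none_iff.1 hl.ne_nil)
  refine ⟨hbases, ⟨x, (hleaves x).2 hx, fun y hy => ?_⟩, fun x hx => (hleaves x).2 hx⟩
  exact Option.some_injective _ (((hleaves y).1 hy).symm.trans hx)

/-- Let `G'` be a finite AND/OR tree (each node has at most
one parent; the successor relation is well-founded) with root `s`, cost
functions `p, d`, and a fixed linear order on nodes for tie-breaking. Let `G₀`
be the greedy solution base rooted at `s` (tie-break-least `c + p`-minimizing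
successor at OR nodes, all successors at AND nodes) and `Ḡ₀` the greedy
disproof base rooted at `s` (tie-break-least `c + d`-minimizing successor at
AND nodes, all successors at OR nodes). Then the set of nodes common to `G₀`
and `Ḡ₀` is exactly the set of nodes of the PNS* selection path from `s`; in
particular `G₀` and `Ḡ₀` have exactly one leaf in common, namely the leaf at
which the PNS* selection path terminates. -/
theorem greedy_bases_intersection_eq_pns_path {V : Type} [Fintype V] [LinearOrder V]
    (G : AOGraph V)
    (htree : ∀ x n n' : V, x ∈ G.succ n → x ∈ G.succ n' → n = n')
    (h hb : V → ℝ≥0∞) (Ψ : CombRule) (p d : V → ℝ≥0∞)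
    (hp : IsProofCost G h Ψ p) (hd : IsDisproofCost G hb Ψ d)
    (s : V) (l : List V) (hl : IsPNSPath G p d s l) :
    (∀ n : V, (InGreedyProofBase G p s n ∧ InGreedyDisproofBase G d s n) ↔ n ∈ l) ∧
    (∃! x : V, G.succ x = ∅ ∧ InGreedyProofBase G p s x ∧ InGreedyDisproofBase G d s x) ∧
    (∀ x : V, l.getLast? = some x →
      G.succ x = ∅ ∧ InGreedyProofBase G p s x ∧ InGreedyDisproofBase G d s x) :=
  greedy_bases_intersection_eq_pns_path_general G htree p d s l hl
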